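/- Let Ω be an open Riemann surface on which: (1) H¹(Ω, 𝒪_Ω) is finite-dimensional, and (2) there is a holomorphic map π : Ω → ℂ that is locally biholomorphic. Then any two distinct points a, b ∈ Ω with π(a) = π(b) = 0 are separated by a global holomorphic function on Ω: there exists F meromorphic on Ω, holomorphic except for a pole at a, such that π^h F is holomorphic on Ω with (π^h F)(a) ≠ 0 and (π^h F)(b) = 0 for some h ≥ 1. -/

import Mathlib

open Set

/-- A Riemann domain over `ℂⁿ`: a connected topological space `X` together with a
locally homeomorphic (hence, via the charts given by `π` itself, locally biholomorphic)
projection `π : X → ℂⁿ`. -/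
structure RiemannDomain (X : Type*) [TopologicalSpace X] (n : ℕ) where
  π : X → (Fin n → ℂ)
  continuous_π : Continuous π
  connected : ConnectedSpace X
  isLocalHomeomorph : IsLocalHomeomorph π

namespace RiemannDomain

variable {X : Type*} [TopologicalSpace X] {n : ℕ}

/-- `RD.SheetIn Ω r x ρ` : there is a "sheet" inside `Ω` around `x`, i.e. an open set `U ⊆ Ω`
containing `x` on which `π` is injective and whose image is the open polydisc of
multiradius `ρ • r` centered at `π x`. -/
def SheetIn (RD : RiemannDomain X n) (Ω : Set X) (r : Fin n → ℝ) (x : X) (ρ : ℝ) : Prop :=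
  ∃ U : Set X, IsOpen U ∧ x ∈ U ∧ U ⊆ Ω ∧ Set.InjOn RD.π U ∧
    RD.π '' U = {z : Fin n → ℂ | ∀ j, dist (z j) (RD.π x j) < ρ * r j}

/-- `δ` is the boundary distance function of `Ω ⊆ X` with respect to the polydisc of
multiradius `r`: at each point of `Ω` it is the least upper bound of the radii of sheets. -/
def IsBoundaryDistOn (RD : RiemannDomain X n) (Ω : Set X) (r : Fin n → ℝ) (δ : X → ℝ) : Prop :=
  ∀ x ∈ Ω, IsLUB {ρ : ℝ | 0 < ρ ∧ RD.SheetIn Ω r x ρ} (δ x)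

/-- A function `f : X → ℂ` is holomorphic on a subset `A` of the Riemann domain `X` if near
every point of `A` it is, read through a sheet of `π`, (the restriction to `A` of) a
holomorphic function of the base variables. For open `A` this is the usual notion of a
holomorphic function on `A`; for an analytic subset `A` it means local holomorphic
extendability to the ambient space. -/
def HolomorphicOn (RD : RiemannDomain X n) (f : X → ℂ) (A : Set X) : Prop :=
  ∀ x ∈ A, ∃ U : Set X, IsOpen U ∧ x ∈ U ∧ Set.InjOn RD.π U ∧ IsOpen (RD.π '' U) ∧
    ∃ g : (Fin n → ℂ) → ℂ, DifferentiableOn ℂ g (RD.π '' U) ∧ Set.EqOn f (g ∘ RD.π) (U ∩ A)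

/-- Holomorphically convex hull of `K` in `Ω` with respect to `𝒪(Ω)`. -/
def hull (RD : RiemannDomain X n) (Ω K : Set X) : Set X :=
  {x ∈ Ω | ∀ f : X → ℂ, RD.HolomorphicOn f Ω → ‖f x‖ ≤ sSup ((fun y => ‖f y‖) '' K)}

/-- Plurisubharmonicity of `u` on a subset `s ⊆ ℂⁿ`: upper semicontinuity together with the
sub-mean-value inequality on every complex line (on circles whose closed disc stays in `s`). -/
def PlurisubharmonicOn (u : (Fin n → ℂ) → ℝ) (s : Set (Fin n → ℂ)) : Prop :=
  UpperSemicontinuousOn u s ∧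
  ∀ z ∈ s, ∀ w : Fin n → ℂ, ∀ R : ℝ, 0 < R →
    (∀ t : ℂ, ‖t‖ ≤ R → z + t • w ∈ s) →
    u z ≤ (1 / (2 * Real.pi)) *
      ∫ θ in (0:ℝ)..(2 * Real.pi), u (z + ((R : ℂ) * Complex.exp (θ * Complex.I)) • w)

/-- A function `v : X → ℝ` is plurisubharmonic on `Ω ⊆ X` if near every point of `Ω`,
read through a sheet of `π`, it is a plurisubharmonic function of the base variables. -/
def PSHOn (RD : RiemannDomain X n) (v : X → ℝ) (Ω : Set X) : Prop :=
  ∀ x ∈ Ω, ∃ U : Set X, IsOpen U ∧ x ∈ U ∧ U ⊆ Ω ∧ Set.InjOn RD.π U ∧ IsOpen (RD.π '' U) ∧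
    ∃ g : (Fin n → ℂ) → ℝ, PlurisubharmonicOn g (RD.π '' U) ∧ Set.EqOn v (g ∘ RD.π) U

/-- `φ` is an exhaustion function of `X`: all sublevel sets are relatively compact. -/
def IsExhaustion {X : Type*} [TopologicalSpace X] (φ : X → ℝ) : Prop :=
  ∀ c : ℝ, IsCompact (closure {x | φ x < c})

/-- An open set `Ω` of the Riemann domain `X` is Stein if it is holomorphically separable,
possesses global holomorphic local coordinates at every point, and is holomorphically convex. -/
def IsSteinOn (RD : RiemannDomain X n) (Ω : Set X) : Prop :=
  (∀ a ∈ Ω, ∀ b ∈ Ω, a ≠ b → ∃ f : X → ℂ, RD.HolomorphicOn f Ω ∧ f a ≠ f b) ∧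
  (∀ x ∈ Ω, ∃ f : Fin n → (X → ℂ), (∀ j, RD.HolomorphicOn (f j) Ω) ∧
    ∃ U : Set X, IsOpen U ∧ x ∈ U ∧ U ⊆ Ω ∧ Set.InjOn RD.π U ∧ IsOpen (RD.π '' U) ∧
      ∃ g : (Fin n → ℂ) → (Fin n → ℂ), DifferentiableOn ℂ g (RD.π '' U) ∧
        (∀ y ∈ U, (fun j => f j y) = g (RD.π y)) ∧
        Function.Bijective (fderivWithin ℂ g (RD.π '' U) (RD.π x)) ∧
        Set.InjOn g (RD.π '' U)) ∧
  (∀ K : Set X, K ⊆ Ω → IsCompact K → IsCompact (RD.hull Ω K))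

end RiemannDomain

/-- `A` is compactly contained in `B`. -/
def CompactlyContained {X : Type*} [TopologicalSpace X] (A B : Set X) : Prop :=
  IsCompact (closure A) ∧ closure A ⊆ B

namespace RiemannDomain

variable {X : Type*} [TopologicalSpace X] {n : ℕ}

/-- A holomorphic extension of a Riemann domain `(X, π)` over `ℂⁿ`: a Riemann domain
`(Y, π')` with an injection `ι : X → Y` over `ℂⁿ` to which all global holomorphic
functions of `X` extend. -/
structure Extension (RD : RiemannDomain X n) (Y : Type*) [TopologicalSpace Y]
    (RDY : RiemannDomain Y n) where
  ι : X → Y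
  inj : Function.Injective ι
  comm : RDY.π ∘ ι = RD.π
  extends_holo : ∀ f : X → ℂ, RD.HolomorphicOn f Set.univ →
    ∃ g : Y → ℂ, RDY.HolomorphicOn g Set.univ ∧ ∀ x, g (ι x) = f x

/-- `X` is a domain of holomorphy: it admits no holomorphic extension other than itself,
i.e. any holomorphic extension is onto. -/
def IsDomainOfHolomorphy {X : Type u} [TopologicalSpace X] {n : ℕ}
    (RD : RiemannDomain X n) : Prop :=
  ∀ (Y : Type u) (_ : TopologicalSpace Y) (RDY : RiemannDomain Y n)
    (e : RD.Extension Y RDY), Function.Surjective e.ι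

/-- A relatively compact open set `Ω ⋐ X` is strongly pseudoconvex if there are a
neighborhood `U` of `∂Ω` and a `C²` function `φ` on `U` with `Ω ∩ U = {φ < 0}` whose Levi
form (expressed through the charts of `π` by the real Hessian, via
`⟨∂∂̄ψ(z) w, w⟩ = (1/4)(Hψ(z)(w,w) + Hψ(z)(iw,iw))`) is positive definite. -/
def StronglyPseudoconvex (RD : RiemannDomain X n) (Ω : Set X) : Prop :=
  IsOpen Ω ∧ IsCompact (closure Ω) ∧
  ∃ U : Set X, IsOpen U ∧ frontier Ω ⊆ U ∧ ∃ φ : X → ℝ,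
    ({x ∈ U | φ x < 0} = Ω ∩ U) ∧
    ∀ x ∈ U, ∃ V : Set X, IsOpen V ∧ x ∈ V ∧ V ⊆ U ∧ Set.InjOn RD.π V ∧
      IsOpen (RD.π '' V) ∧
      ∃ ψ : (Fin n → ℂ) → ℝ, ContDiffOn ℝ 2 ψ (RD.π '' V) ∧
        Set.EqOn φ (ψ ∘ RD.π) V ∧
        ∀ z ∈ RD.π '' V, ∀ w : Fin n → ℂ, w ≠ 0 →
          0 < (iteratedFDerivWithin ℝ 2 ψ (RD.π '' V) z) ![w, w] +
              (iteratedFDerivWithin ℝ 2 ψ (RD.π '' V) z)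
                ![(Complex.I : ℂ) • w, (Complex.I : ℂ) • w]

/-- `S` is a closed complex submanifold of the open set `Ω ⊆ X`: it is closed in `Ω` and is
locally, through the charts of `π`, the common zero set of finitely many holomorphic
functions with linearly independent differentials. -/
def IsClosedSubmanifoldIn (RD : RiemannDomain X n) (S Ω : Set X) : Prop :=
  S ⊆ Ω ∧ IsClosed (Subtype.val ⁻¹' S : Set Ω) ∧
  ∀ x ∈ S, ∃ U : Set X, IsOpen U ∧ x ∈ U ∧ U ⊆ Ω ∧ Set.InjOn RD.π U ∧ IsOpen (RD.π '' U) ∧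
    ∃ (d : ℕ) (h : Fin d → (Fin n → ℂ) → ℂ),
      (∀ i, DifferentiableOn ℂ (h i) (RD.π '' U)) ∧
      (U ∩ S = {y ∈ U | ∀ i, h i (RD.π y) = 0}) ∧
      LinearIndependent ℂ (fun i => fderivWithin ℂ (h i) (RD.π '' U) (RD.π x))

end RiemannDomain

/-! The functions `π^{-(k+1)}`, `k ≤ d`, are Čech 1-cocycles for the cover of `Ω` by a sheet
`U₀` around `a` and by `Ω ∖ {a}`. Finiteness of `H¹` makes a nontrivial combination
`π⁻¹ p(π⁻¹)`, with `p ≠ 0` a polynomial of degree `N ≤ d`, a coboundary `f₁ - f₀`. Then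
`π^{N+1} f₁ = π^{N+1} f₀ + (reverse p)(π)` on `U₀ ∖ {a}`, so `π^{N+1} f₁` extends holomorphically
across `a` with value the leading coefficient of `p` there, and it vanishes at `b`, where `π = 0`
and `f₁` is holomorphic. -/

open Polynomial

theorem Polynomial.eval_reverse_eq_pow_mul_eval_inv {K : Type*} [Field K] (p : K[X]) {w : K}
    (hw : w ≠ 0) : p.reverse.eval w = w ^ p.natDegree * p.eval w⁻¹ := by
  let := invertibleOfNonzero (inv_ne_zero hw)
  have h : p.reverse.eval w * (w ^ p.natDegree)⁻¹ = p.eval w⁻¹ := by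
    have h₂ := eval₂_reverse_mul_pow (RingHom.id K) w⁻¹ p
    rwa [invOf_eq_inv, inv_inv, inv_pow] at h₂
  rw [← h]
  field_simp

theorem Polynomial.eval_ofFn {R : Type*} [CommSemiring R] [DecidableEq R] {m : ℕ}
    (c : Fin m → R) (w : R) : (ofFn m c).eval w = ∑ k, c k * w ^ (k : ℕ) := by
  simp [ofFn_eq_sum_monomial, eval_finsetSum]

namespace RiemannDomain

variable {X : Type*} [TopologicalSpace X]

section

variable {n : ℕ}

theorem t1Space (RD : RiemannDomain X n) : T1Space X :=
  t1Space_iff_specializes_imp_eq.2 fun x y hxy => by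
    obtain ⟨e, hy, he⟩ := RD.isLocalHomeomorph y
    refine e.injOn (hxy.mem_open e.open_source hy) hy ?_
    rw [← he]
    exact (hxy.map RD.continuous_π).eq

variable (RD : RiemannDomain X n)

theorem exists_isOpen_injOn (x : X) :
    ∃ U : Set X, IsOpen U ∧ x ∈ U ∧ InjOn RD.π U := by
  obtain ⟨e, hx, he⟩ := RD.isLocalHomeomorph x
  exact ⟨e.source, e.open_source, hx, he ▸ e.injOn⟩

variable {RD} {f g : X → ℂ} {A B : Set X}

theorem HolomorphicOn.mono (hf : RD.HolomorphicOn f B) (hAB : A ⊆ B) : RD.HolomorphicOn f A :=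
  fun x hx =>
    let ⟨U, hU, hxU, hinj, himg, φ, hφ, hfφ⟩ := hf x (hAB hx)
    ⟨U, hU, hxU, hinj, himg, φ, hφ, hfφ.mono (inter_subset_inter_right U hAB)⟩

theorem HolomorphicOn.congr (hf : RD.HolomorphicOn f A) (hfg : EqOn f g A) :
    RD.HolomorphicOn g A :=
  fun x hx =>
    let ⟨U, hU, hxU, hinj, himg, φ, hφ, hfφ⟩ := hf x hx
    ⟨U, hU, hxU, hinj, himg, φ, hφ, fun _ hy => (hfg hy.2).symm.trans (hfφ hy)⟩

theorem HolomorphicOn.exists_subset (hf : RD.HolomorphicOn f A) {x : X} (hx : x ∈ A)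
    {V : Set X} (hV : IsOpen V) (hxV : x ∈ V) :
    ∃ U ⊆ V, IsOpen U ∧ x ∈ U ∧ InjOn RD.π U ∧ IsOpen (RD.π '' U) ∧
      ∃ φ : (Fin n → ℂ) → ℂ, DifferentiableOn ℂ φ (RD.π '' U) ∧ EqOn f (φ ∘ RD.π) (U ∩ A) := by
  obtain ⟨U, hU, hxU, hinj, -, φ, hφ, hfφ⟩ := hf x hx
  refine ⟨U ∩ V, inter_subset_right, hU.inter hV, ⟨hxU, hxV⟩, hinj.mono inter_subset_left,
    RD.isLocalHomeomorph.isOpenMap _ (hU.inter hV), φ, hφ.mono (image_mono inter_subset_left),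
    hfφ.mono (inter_subset_inter_left A inter_subset_left)⟩

theorem HolomorphicOn.mul (hf : RD.HolomorphicOn f A) (hg : RD.HolomorphicOn g A) :
    RD.HolomorphicOn (fun x => f x * g x) A := by
  intro x hx
  obtain ⟨U, hU, hxU, -, -, φ, hφ, hfφ⟩ := hf x hx
  obtain ⟨V, hVU, hV, hxV, hinj, himg, ψ, hψ, hgψ⟩ := hg.exists_subset hx hU hxU
  refine ⟨V, hV, hxV, hinj, himg, fun z => φ z * ψ z,
    (hφ.mono (image_mono hVU)).mul hψ, fun y hy => ?_⟩
  simp only [Function.comp_apply, hfφ ⟨hVU hy.1, hy.2⟩, hgψ hy]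

theorem HolomorphicOn.add (hf : RD.HolomorphicOn f A) (hg : RD.HolomorphicOn g A) :
    RD.HolomorphicOn (fun x => f x + g x) A := by
  intro x hx
  obtain ⟨U, hU, hxU, -, -, φ, hφ, hfφ⟩ := hf x hx
  obtain ⟨V, hVU, hV, hxV, hinj, himg, ψ, hψ, hgψ⟩ := hg.exists_subset hx hU hxU
  refine ⟨V, hV, hxV, hinj, himg, fun z => φ z + ψ z,
    (hφ.mono (image_mono hVU)).add hψ, fun y hy => ?_⟩
  simp only [Function.comp_apply, hfφ ⟨hVU hy.1, hy.2⟩, hgψ hy]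

theorem holomorphicOn_of_forall_isOpen
    (h : ∀ x ∈ A, ∃ V : Set X, IsOpen V ∧ x ∈ V ∧ RD.HolomorphicOn f V) :
    RD.HolomorphicOn f A := by
  intro x hx
  obtain ⟨V, hV, hxV, hf⟩ := h x hx
  obtain ⟨U, hUV, hU, hxU, hinj, himg, φ, hφ, hfφ⟩ := hf.exists_subset hxV hV hxV
  exact ⟨U, hU, hxU, hinj, himg, φ, hφ, fun y hy => hfφ ⟨hy.1, hUV hy.1⟩⟩

variable (RD)

theorem holomorphicOn_comp_π {s : Set (Fin n → ℂ)} (hs : IsOpen s) {φ : (Fin n → ℂ) → ℂ}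
    (hφ : DifferentiableOn ℂ φ s) : RD.HolomorphicOn (φ ∘ RD.π) (RD.π ⁻¹' s) := by
  intro x hx
  obtain ⟨U, hU, hxU, hinj⟩ := RD.exists_isOpen_injOn x
  have hU' : IsOpen (U ∩ RD.π ⁻¹' s) := hU.inter (hs.preimage RD.continuous_π)
  exact ⟨_, hU', ⟨hxU, hx⟩, hinj.mono inter_subset_left, RD.isLocalHomeomorph.isOpenMap _ hU',
    φ, hφ.mono (image_subset_iff.2 inter_subset_right), fun _ _ => rfl⟩

theorem holomorphicOn_comp_π_of_differentiable {φ : (Fin n → ℂ) → ℂ}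
    (hφ : Differentiable ℂ φ) (A : Set X) : RD.HolomorphicOn (φ ∘ RD.π) A :=
  (RD.holomorphicOn_comp_π isOpen_univ hφ.differentiableOn).mono (subset_univ A)

end

theorem apply_zero_ne_zero_of_injOn (RD : RiemannDomain X 1) {a x : X} (ha : RD.π a = 0)
    {U : Set X} (hinj : InjOn RD.π U) (haU : a ∈ U) (hxU : x ∈ U) (hxa : x ≠ a) :
    RD.π x 0 ≠ 0 := fun h0 =>
  hxa (hinj hxU haU (by rw [ha]; funext i; rwa [Subsingleton.elim i 0]))

variable [DecidableEq X]

theorem holomorphicOn_update_pow_mul (RD : RiemannDomain X 1) {a : X} (ha : RD.π a = 0)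
    {U₀ : Set X} (hU₀ : IsOpen U₀) (haU₀ : a ∈ U₀) (hinj : InjOn RD.π U₀) {f₀ f₁ : X → ℂ}
    (hf₀ : RD.HolomorphicOn f₀ U₀) (hf₁ : RD.HolomorphicOn f₁ {a}ᶜ) (p : ℂ[X])
    (hf₁f₀ : ∀ x ∈ U₀, x ≠ a → f₁ x - f₀ x = (RD.π x 0)⁻¹ * p.eval (RD.π x 0)⁻¹) :
    RD.HolomorphicOn
      (Function.update (fun x => RD.π x 0 ^ (p.natDegree + 1) * f₁ x) a p.leadingCoeff) univ := by
  have := RD.t1Space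
  have hpow : RD.HolomorphicOn (fun x => RD.π x 0 ^ (p.natDegree + 1)) univ :=
    RD.holomorphicOn_comp_π_of_differentiable (φ := fun z => z 0 ^ (p.natDegree + 1))
      (by fun_prop) univ
  have hrev : RD.HolomorphicOn (fun x => p.reverse.eval (RD.π x 0)) univ :=
    RD.holomorphicOn_comp_π_of_differentiable (φ := fun z => p.reverse.eval (z 0))
      (by fun_prop) univ
  refine holomorphicOn_of_forall_isOpen fun x _ => ?_
  by_cases hxa : x = a
  · refine ⟨U₀, hU₀, hxa ▸ haU₀, ?_⟩
    refine (((hpow.mono (subset_univ _)).mul hf₀).add (hrev.mono (subset_univ _))).congr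
      fun y hy => ?_
    rcases eq_or_ne y a with rfl | hya
    · simp [ha, ← coeff_zero_eq_eval_zero, coeff_zero_reverse]
    · have hw := RD.apply_zero_ne_zero_of_injOn ha hinj haU₀ hy hya
      dsimp only
      rw [Function.update_of_ne hya, eval_reverse_eq_pow_mul_eval_inv _ hw,
        sub_eq_iff_eq_add'.1 (hf₁f₀ y hy hya)]
      field_simp
      ring
  · exact ⟨{a}ᶜ, isOpen_compl_singleton, hxa,
      ((hpow.mono (subset_univ _)).mul hf₁).congr fun y hy => by rw [Function.update_of_ne hy]⟩

end RiemannDomain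

/-- On an open Riemann surface `Ω` with `H¹(Ω, 𝒪)` finite-dimensional
(encoded: for some `d`, any `d+1` Čech 1-cocycles for a two-set open cover admit a
nontrivial linear combination that is a coboundary) carrying a locally biholomorphic
`π : Ω → ℂ`, any two distinct points `a ≠ b` with `π a = π b = 0` are separated: there is
`F` holomorphic off `a` such that `π^h F` extends to `G ∈ 𝒪(Ω)` with `G a ≠ 0`, `G b = 0`. -/
theorem stmt_6 {Ω : Type*} [TopologicalSpace Ω] (RD : RiemannDomain Ω 1)
    (hH1 : ∃ d : ℕ, ∀ U₀ U₁ : Set Ω, IsOpen U₀ → IsOpen U₁ → U₀ ∪ U₁ = Set.univ →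
      ∀ γ : Fin (d + 1) → Ω → ℂ, (∀ k, RD.HolomorphicOn (γ k) (U₀ ∩ U₁)) →
        ∃ c : Fin (d + 1) → ℂ, c ≠ 0 ∧
          ∃ f₀ f₁ : Ω → ℂ, RD.HolomorphicOn f₀ U₀ ∧ RD.HolomorphicOn f₁ U₁ ∧
            Set.EqOn (fun x => ∑ k, c k * γ k x) (fun x => f₁ x - f₀ x) (U₀ ∩ U₁))
    (a b : Ω) (hab : a ≠ b) (ha : RD.π a = 0) (hb : RD.π b = 0) :
    ∃ h : ℕ, 1 ≤ h ∧ ∃ F G : Ω → ℂ,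
      RD.HolomorphicOn F ({a}ᶜ) ∧ RD.HolomorphicOn G Set.univ ∧
      Set.EqOn G (fun x => (RD.π x 0) ^ h * F x) ({a}ᶜ) ∧ G a ≠ 0 ∧ G b = 0 := by
  classical
  have := RD.t1Space
  obtain ⟨d, hd⟩ := hH1
  obtain ⟨U₀, hU₀, haU₀, hinj⟩ := RD.exists_isOpen_injOn a
  have hcover : U₀ ∪ {a}ᶜ = univ :=
    eq_univ_of_forall fun x => (eq_or_ne x a).imp (fun h : x = a => h ▸ haU₀) id
  have hγ (k : Fin (d + 1)) :
      RD.HolomorphicOn (fun x => (RD.π x 0)⁻¹ ^ ((k : ℕ) + 1)) (U₀ ∩ {a}ᶜ) :=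
    (RD.holomorphicOn_comp_π (isOpen_ne_fun (continuous_apply 0) continuous_const)
      (φ := fun z => (z 0)⁻¹ ^ ((k : ℕ) + 1))
      (((differentiable_apply 0).differentiableOn.inv fun _ h => h).pow _)).mono
      fun x hx => RD.apply_zero_ne_zero_of_injOn ha hinj haU₀ hx.1 hx.2
  obtain ⟨c, hc, f₀, f₁, hf₀, hf₁, hcoc⟩ :=
    hd U₀ {a}ᶜ hU₀ isOpen_compl_singleton hcover _ hγ
  set p := ofFn (d + 1) c
  have hp : p ≠ 0 := (map_ne_zero_iff _ (injective_ofFn _)).2 hc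
  have hf₁f₀ (x) (hx : x ∈ U₀) (hxa : x ≠ a) :
      f₁ x - f₀ x = (RD.π x 0)⁻¹ * p.eval (RD.π x 0)⁻¹ := by
    rw [← show _ = f₁ x - f₀ x from hcoc ⟨hx, hxa⟩, eval_ofFn, Finset.mul_sum]
    exact Finset.sum_congr rfl fun k _ => by ring
  refine ⟨p.natDegree + 1, le_add_self, f₁, _, hf₁,
    RD.holomorphicOn_update_pow_mul ha hU₀ haU₀ hinj hf₀ hf₁ p hf₁f₀,
    fun x hx => Function.update_of_ne hx _ _, ?_, ?_⟩
  · simpa using hp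
  · simp [Function.update_of_ne hab.symm, hb]
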